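/- The range of the row operator M_z : H_m(𝔹)ⁿ → H_m(𝔹) is closed and equals {f ∈ H_m(𝔹) : f(0) = 0}. -/

import Mathlib

open scoped InnerProductSpace

set_option synthInstance.maxHeartbeats 400000
set_option maxHeartbeats 800000

instance piLp_completeSpace {H : Type*} [NormedAddCommGroup H] [InnerProductSpace ℂ H]
    [CompleteSpace H] {n : ℕ} : CompleteSpace (PiLp 2 (fun _ : Fin n => H)) := by
  have e := (PiLp.continuousLinearEquiv 2 ℂ (fun _ : Fin n => H)).symm
  exact (e.isUniformEmbedding.isUniformInducing.completeSpace_congr e.surjective).mp inferInstance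

/-- The weight `ρ_m(α) = (m+|α|-1)!/(α!(m-1)!)`. -/
noncomputable def rhoR (m : ℕ) {n : ℕ} (α : Fin n → ℕ) : ℝ :=
  ((m + (∑ i, α i) - 1).factorial : ℝ) /
    ((∏ i, ((α i).factorial : ℝ)) * ((m - 1).factorial : ℝ))

/-! The monomials diagonalise `M_z M_z^* = ∑ᵢ M_{zᵢ} M_{zᵢ}^*`: since `M_{zᵢ}` shifts `e α` to
`e (α + εᵢ)`, its adjoint shifts back with weight `ρ(α - εᵢ)/ρ(α) = αᵢ/(m + |α| - 1)`, so `e α` has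
eigenvalue `|α|/(m + |α| - 1)`, which is at least `1/m` for `α ≠ 0`. Hence `‖M_z^* f‖² ≥ ‖f‖²/m`
whenever `f(0) = 0`, i.e. `M_z M_z^*` is coercive on the closed subspace `{f(0) = 0}`, which
contains the range of `M_z` because `M_z^* 1 = 0`. A coercive operator on a Hilbert space is onto
(its range is closed and has trivial orthogonal complement), so `M_z` maps onto `{f(0) = 0}`. -/

open Submodule ContinuousLinearMap
open scoped InnerProduct

section OrthogonalFamily

variable {𝕜 E ι : Type*} [RCLike 𝕜] [NormedAddCommGroup E] [InnerProductSpace 𝕜 E] {e : ι → E}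

theorem eq_of_forall_inner_eq_of_dense_span (hdense : Dense (span 𝕜 (Set.range e) : Set E))
    {x y : E} (h : ∀ i, ⟪e i, x⟫_𝕜 = ⟪e i, y⟫_𝕜) : x = y := by
  have hspan : span 𝕜 (Set.range e) ≤ (𝕜 ∙ (x - y))ᗮ :=
    span_le.2 <| Set.range_subset_iff.2 fun i ↦
      mem_orthogonal_singleton_iff_inner_left.2 (by rw [inner_sub_right, h, sub_self])
  refine hdense.eq_of_inner_right 𝕜 fun v hv ↦ ?_
  rw [← sub_eq_zero, ← inner_sub_right]
  exact mem_orthogonal_singleton_iff_inner_left.1 (hspan hv)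

theorem re_inner_sum_smul_sum_smul_of_pairwise (horth : Pairwise fun a b ↦ ⟪e a, e b⟫_𝕜 = 0)
    (s : Finset ι) (μ : ι → ℝ) (u : ι → 𝕜) :
    RCLike.re ⟪∑ a ∈ s, ((μ a : 𝕜) * u a) • e a, ∑ a ∈ s, u a • e a⟫_𝕜 =
      ∑ a ∈ s, μ a * ‖u a‖ ^ 2 * ‖e a‖ ^ 2 := by
  classical
  rw [sum_inner, map_sum]
  refine Finset.sum_congr rfl fun a ha ↦ ?_
  rw [inner_sum, Finset.sum_eq_single_of_mem a ha fun b _ hba ↦ by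
    rw [inner_smul_left, inner_smul_right, horth hba.symm, mul_zero, mul_zero]]
  have hterm : starRingEnd 𝕜 ((μ a : 𝕜) * u a) * (u a * (‖e a‖ : 𝕜) ^ 2) =
      ((μ a * ‖u a‖ ^ 2 * ‖e a‖ ^ 2 : ℝ) : 𝕜) := by
    rw [map_mul, RCLike.conj_ofReal]; push_cast; rw [← RCLike.conj_mul]; ring
  rw [inner_smul_left, inner_smul_right, inner_self_eq_norm_sq_to_K, hterm, RCLike.ofReal_re]

theorem mul_norm_sq_le_re_inner_of_apply_eq_smul (horth : Pairwise fun a b ↦ ⟪e a, e b⟫_𝕜 = 0)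
    (hdense : Dense (span 𝕜 (Set.range e) : Set E)) {T : E →L[𝕜] E} {μ : ι → ℝ}
    (hT : ∀ a, T (e a) = (μ a : 𝕜) • e a) {c : ℝ} (hc : ∀ a, c ≤ μ a) (x : E) :
    c * ‖x‖ ^ 2 ≤ RCLike.re ⟪T x, x⟫_𝕜 := by
  induction x using hdense.induction with
  | mem x hx =>
    obtain ⟨u, rfl⟩ := Finsupp.mem_span_range_iff_exists_finsupp.1 hx
    have hTx : T (u.sum fun a r ↦ r • e a) = ∑ a ∈ u.support, ((μ a : 𝕜) * u a) • e a := by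
      simp only [Finsupp.sum, map_sum, map_smul, hT, smul_smul, mul_comm]
    have hnorm : ‖u.sum fun a r ↦ r • e a‖ ^ 2 = ∑ a ∈ u.support, ‖u a‖ ^ 2 * ‖e a‖ ^ 2 := by
      have h := re_inner_sum_smul_sum_smul_of_pairwise horth u.support 1 u
      simp only [Pi.one_apply, RCLike.ofReal_one, one_mul] at h
      rw [← inner_self_eq_norm_sq (𝕜 := 𝕜), Finsupp.sum, h]
    rw [hTx, hnorm, Finsupp.sum, re_inner_sum_smul_sum_smul_of_pairwise horth, Finset.mul_sum]
    refine Finset.sum_le_sum fun a _ ↦ ?_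
    rw [← mul_assoc]
    gcongr
    exact hc a
  | isClosed =>
    exact isClosed_le (by fun_prop) (by fun_prop)

end OrthogonalFamily

section Adjoint

variable {𝕜 E F : Type*} [RCLike 𝕜] [NormedAddCommGroup E] [InnerProductSpace 𝕜 E]
  [CompleteSpace E] [NormedAddCommGroup F] [InnerProductSpace 𝕜 F] [CompleteSpace F]

theorem adjoint_apply_of_apply_eq_comp {ι : Type*} {e : ι → E}
    (horth : Pairwise fun a b ↦ ⟪e a, e b⟫_𝕜 = 0) (hdense : Dense (span 𝕜 (Set.range e) : Set E))
    {S : E →L[𝕜] E} {σ : ι → ι} (hσ : σ.Injective) (hS : ∀ a, S (e a) = e (σ a)) (a : ι) :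
    (S†) (e (σ a)) = ((‖e (σ a)‖ ^ 2 / ‖e a‖ ^ 2 : ℝ) : 𝕜) • e a := by
  refine eq_of_forall_inner_eq_of_dense_span hdense fun b ↦ ?_
  rw [adjoint_inner_right, hS, inner_smul_right]
  obtain rfl | hba := eq_or_ne b a
  · rw [inner_self_eq_norm_sq_to_K, inner_self_eq_norm_sq_to_K]
    obtain h0 | h0 := eq_or_ne (e b) 0
    · simp [← hS, h0]
    · have : (‖e b‖ : 𝕜) ≠ 0 := by simpa using h0
      push_cast
      field_simp
  · rw [horth (hσ.ne hba), horth hba, mul_zero]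

theorem adjoint_apply_eq_zero_of_notMem_range {ι : Type*} {e : ι → E}
    (horth : Pairwise fun a b ↦ ⟪e a, e b⟫_𝕜 = 0) (hdense : Dense (span 𝕜 (Set.range e) : Set E))
    {S : E →L[𝕜] E} {σ : ι → ι} (hS : ∀ a, S (e a) = e (σ a)) {b : ι} (hb : b ∉ Set.range σ) :
    (S†) (e b) = 0 :=
  eq_of_forall_inner_eq_of_dense_span hdense fun a ↦ by
    rw [adjoint_inner_right, hS, inner_zero_right, horth fun h ↦ hb ⟨a, h⟩]

theorem adjoint_apply_of_apply_eq_sum {ι : Type*} [Fintype ι] (Mz : ι → E →L[𝕜] F)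
    {M : PiLp 2 (fun _ : ι ↦ E) →L[𝕜] F} (hM : ∀ f, M f = ∑ i, Mz i (f i)) (g : F) :
    (M†) g = WithLp.toLp 2 fun i ↦ ((Mz i)†) g :=
  ext_inner_right 𝕜 fun f ↦ by
    simp only [adjoint_inner_left, hM, inner_sum, PiLp.inner_apply]

theorem surjective_of_mul_norm_sq_le_re_inner (S : E →L[𝕜] E) {c : ℝ} (hc : 0 < c)
    (h : ∀ x, c * ‖x‖ ^ 2 ≤ RCLike.re ⟪S x, x⟫_𝕜) : Function.Surjective S := by
  have hbound : ∀ x, ‖x‖ ≤ c⁻¹ * ‖S x‖ := fun x ↦ by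
    rw [le_inv_mul_iff₀ hc]
    obtain hx | hx := (norm_nonneg x).eq_or_lt
    · rw [← hx, mul_zero]; positivity
    refine le_of_mul_le_mul_right ?_ hx
    calc c * ‖x‖ * ‖x‖ = c * ‖x‖ ^ 2 := by ring
      _ ≤ RCLike.re ⟪S x, x⟫_𝕜 := h x
      _ ≤ ‖S x‖ * ‖x‖ := (RCLike.re_le_norm _).trans (norm_inner_le_norm _ _)
  have hclosed : IsClosed (Set.range S) :=
    (S.antilipschitz_of_bound (K := ⟨c⁻¹, by positivity⟩) hbound).isClosed_range
      S.uniformContinuous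
  have : CompleteSpace S.range := hclosed.completeSpace_coe
  have hortho : S.rangeᗮ = ⊥ := (Submodule.eq_bot_iff _).2 fun x hx ↦ by
    have hx0 : ⟪S x, x⟫_𝕜 = 0 :=
      inner_right_of_mem_orthogonal (LinearMap.mem_range_self (S : E →ₗ[𝕜] E) x) hx
    have := h x
    rw [hx0, map_zero] at this
    exact norm_eq_zero.1 (pow_eq_zero_iff two_ne_zero |>.1
      (le_antisymm (nonpos_of_mul_nonpos_right this hc) (sq_nonneg _)))
  exact LinearMap.range_eq_top.1 (orthogonal_eq_bot_iff.1 hortho)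

theorem range_eq_of_mul_norm_sq_le_norm_adjoint_sq (M : F →L[𝕜] E) {K : Submodule 𝕜 E}
    (hK : IsClosed (K : Set E)) (hMK : ∀ y, M y ∈ K) {c : ℝ} (hc : 0 < c)
    (h : ∀ x ∈ K, c * ‖x‖ ^ 2 ≤ ‖(M†) x‖ ^ 2) : Set.range M = K := by
  have : CompleteSpace K := hK.completeSpace_coe
  let S : K →L[𝕜] K := ((M ∘L M†) ∘L K.subtypeL).codRestrict K fun x ↦ hMK _
  have hS : Function.Surjective S := surjective_of_mul_norm_sq_le_re_inner S hc fun x ↦ by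
    calc c * ‖x‖ ^ 2 ≤ ‖(M†) x‖ ^ 2 := h x x.2
      _ = RCLike.re ⟪(M ∘L M†) x, x⟫_𝕜 := by
        rw [apply_norm_sq_eq_inner_adjoint_left, adjoint_adjoint]
      _ = RCLike.re ⟪S x, x⟫_𝕜 := rfl
  refine (Set.range_subset_iff.2 hMK).antisymm fun x hx ↦ ?_
  obtain ⟨y, hy⟩ := hS ⟨x, hx⟩
  exact ⟨(M†) y, congrArg Subtype.val hy⟩

end Adjoint

section Weights

variable {n : ℕ}

theorem rhoR_pos (m : ℕ) (α : Fin n → ℕ) : 0 < rhoR m α := by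
  unfold rhoR
  have := fun j ↦ (α j).factorial_pos
  positivity

theorem rhoR_zero (m : ℕ) : rhoR m (0 : Fin n → ℕ) = 1 := by
  have : ((m - 1).factorial : ℝ) ≠ 0 := Nat.cast_ne_zero.2 (m - 1).factorial_ne_zero
  simp [rhoR, this]

theorem sum_add_single_one (β : Fin n → ℕ) (i : Fin n) :
    ∑ j, (β + Pi.single i 1 : Fin n → ℕ) j = ∑ j, β j + 1 := by
  simp only [Pi.add_apply, Finset.sum_add_distrib, Fintype.sum_pi_single']

theorem rhoR_add_single_mul {m : ℕ} (hm : 1 ≤ m) (β : Fin n → ℕ) (i : Fin n) :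
    rhoR m (β + Pi.single i 1) * (β i + 1) = (m + ∑ j, β j) * rhoR m β := by
  have hfact : ∀ j, ((β + Pi.single i 1 : Fin n → ℕ) j).factorial =
      (β j).factorial * if j = i then β i + 1 else 1 := fun j ↦ by
    obtain rfl | hj := eq_or_ne j i
    · simp [Nat.factorial_succ, mul_comm]
    · simp [hj]
  have hprod : ∏ j, (((β + Pi.single i 1 : Fin n → ℕ) j).factorial : ℝ) =
      (∏ j, ((β j).factorial : ℝ)) * (β i + 1) := by
    simp_rw [hfact, Nat.cast_mul, Finset.prod_mul_distrib]
    simp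
  have hsum : m + ∑ j, (β + Pi.single i 1 : Fin n → ℕ) j - 1 = (m + ∑ j, β j - 1) + 1 := by
    rw [sum_add_single_one]; omega
  have hcast : ((m + ∑ j, β j - 1 + 1 : ℕ) : ℝ) = m + ∑ j, β j := by
    rw [Nat.sub_add_cancel (by omega)]; push_cast; rfl
  unfold rhoR
  rw [hsum, hprod, Nat.factorial_succ, Nat.cast_mul, hcast]
  have := fun j ↦ (β j).factorial_pos
  have := (m - 1).factorial_pos
  field_simp

theorem inv_le_ite_add_sum_div {m : ℕ} (hm : 1 ≤ m) (α : Fin n → ℕ) :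
    (m : ℝ)⁻¹ ≤ (if α = 0 then 1 else 0) + (∑ j, α j : ℕ) / (m + (∑ j, α j : ℕ) - 1) := by
  have hm' : (1 : ℝ) ≤ m := by exact_mod_cast hm
  obtain rfl | hα := eq_or_ne α 0
  · simpa using inv_le_one_of_one_le₀ hm'
  obtain ⟨j, hj⟩ := Function.ne_iff.1 hα
  have hs : (1 : ℝ) ≤ (∑ j, α j : ℕ) := by
    exact_mod_cast (Nat.one_le_iff_ne_zero.2 hj).trans
      (Finset.single_le_sum (fun k _ ↦ Nat.zero_le (α k)) (Finset.mem_univ j))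
  rw [if_neg hα, zero_add, inv_eq_one_div, div_le_div_iff₀ (by positivity) (by linarith)]
  nlinarith

end Weights

section Monomials

variable {n m : ℕ} {H : Type*} [NormedAddCommGroup H] [InnerProductSpace ℂ H] {e : (Fin n → ℕ) → H}

theorem pairwise_inner_eq_zero_of_inner_eq_ite
    (horth : ∀ α β, ⟪e α, e β⟫_ℂ = if α = β then ((rhoR m α)⁻¹ : ℂ) else 0) :
    Pairwise fun α β ↦ ⟪e α, e β⟫_ℂ = 0 :=
  fun α β h ↦ (horth α β).trans (if_neg h)

theorem norm_sq_eq_inv_rhoR_of_inner_eq_ite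
    (horth : ∀ α β, ⟪e α, e β⟫_ℂ = if α = β then ((rhoR m α)⁻¹ : ℂ) else 0) (α : Fin n → ℕ) :
    ‖e α‖ ^ 2 = (rhoR m α)⁻¹ := by
  have h := horth α α
  rw [if_pos rfl, inner_self_eq_norm_sq_to_K] at h
  exact Complex.ofReal_injective (by push_cast; exact h)

variable [CompleteSpace H]

theorem adjoint_apply_zero_of_apply_eq_add_single
    (horth : ∀ α β, ⟪e α, e β⟫_ℂ = if α = β then ((rhoR m α)⁻¹ : ℂ) else 0)
    (hdense : Dense ((span ℂ (Set.range e) : Submodule ℂ H) : Set H)) {Mz : H →L[ℂ] H} {i : Fin n}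
    (hMz : ∀ α, Mz (e α) = e (α + Pi.single i 1)) : (Mz†) (e 0) = 0 := by
  refine adjoint_apply_eq_zero_of_notMem_range (pairwise_inner_eq_zero_of_inner_eq_ite horth)
    hdense hMz ?_
  rintro ⟨β, hβ⟩
  simpa using congrFun hβ i

theorem apply_adjoint_apply_of_apply_eq_add_single (hm : 1 ≤ m)
    (horth : ∀ α β, ⟪e α, e β⟫_ℂ = if α = β then ((rhoR m α)⁻¹ : ℂ) else 0)
    (hdense : Dense ((span ℂ (Set.range e) : Submodule ℂ H) : Set H)) {Mz : H →L[ℂ] H} {i : Fin n}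
    (hMz : ∀ α, Mz (e α) = e (α + Pi.single i 1)) (α : Fin n → ℕ) :
    Mz ((Mz†) (e α)) = (((α i : ℝ) / (m + (∑ j, α j : ℕ) - 1) : ℝ) : ℂ) • e α := by
  have hpw := pairwise_inner_eq_zero_of_inner_eq_ite horth
  obtain hα | hα := eq_or_ne (α i) 0
  · have hnot : α ∉ Set.range fun β : Fin n → ℕ ↦ β + Pi.single i 1 := by
      rintro ⟨β, rfl⟩
      simp at hα
    rw [adjoint_apply_eq_zero_of_notMem_range hpw hdense hMz hnot, map_zero, hα]
    simp
  obtain ⟨β, rfl⟩ : ∃ β, α = β + Pi.single i 1 := by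
    refine ⟨α - Pi.single i 1, (tsub_add_cancel_of_le fun j ↦ ?_).symm⟩
    obtain rfl | hj := eq_or_ne j i
    · simpa [Nat.one_le_iff_ne_zero] using hα
    · simp [hj]
  have hcoef : (rhoR m (β + Pi.single i 1))⁻¹ / (rhoR m β)⁻¹ =
      ((β + Pi.single i 1 : Fin n → ℕ) i : ℝ) /
        (m + (∑ j, (β + Pi.single i 1 : Fin n → ℕ) j : ℕ) - 1) := by
    have hden : (m : ℝ) + (∑ j, (β + Pi.single i 1 : Fin n → ℕ) j : ℕ) - 1 =
        m + (∑ j, β j : ℕ) := by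
      rw [sum_add_single_one]; push_cast; ring
    have := rhoR_pos m β
    have := rhoR_pos m (β + Pi.single i 1)
    rw [hden, inv_div_inv, div_eq_div_iff this.ne' (by positivity)]
    simp only [Pi.add_apply, Pi.single_eq_same, Nat.cast_succ]
    linear_combination -rhoR_add_single_mul hm β i
  rw [adjoint_apply_of_apply_eq_comp hpw hdense (add_left_injective _) hMz, map_smul, hMz,
    norm_sq_eq_inv_rhoR_of_inner_eq_ite horth, norm_sq_eq_inv_rhoR_of_inner_eq_ite horth, hcoef]
  rfl

end Monomials

section RowOperator

variable {n m : ℕ} {H : Type*} [NormedAddCommGroup H] [InnerProductSpace ℂ H] [CompleteSpace H]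
  {e : (Fin n → ℕ) → H} {Mz : Fin n → H →L[ℂ] H} {Mrow : PiLp 2 (fun _ : Fin n ↦ H) →L[ℂ] H}

theorem inner_rowOp_eq_zero
    (horth : ∀ α β, ⟪e α, e β⟫_ℂ = if α = β then ((rhoR m α)⁻¹ : ℂ) else 0)
    (hdense : Dense ((span ℂ (Set.range e) : Submodule ℂ H) : Set H))
    (hMz : ∀ i α, Mz i (e α) = e (α + Pi.single i 1)) (hMrow : ∀ f, Mrow f = ∑ i, Mz i (f i))
    (f : PiLp 2 (fun _ : Fin n ↦ H)) : ⟪e 0, Mrow f⟫_ℂ = 0 := by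
  have h : (fun i ↦ ((Mz i)†) (e 0)) = 0 :=
    funext fun i ↦ adjoint_apply_zero_of_apply_eq_add_single horth hdense (hMz i)
  rw [← adjoint_inner_left, adjoint_apply_of_apply_eq_sum Mz hMrow, h, WithLp.toLp_zero,
    inner_zero_left]

theorem rowOp_comp_adjoint_apply (hm : 1 ≤ m)
    (horth : ∀ α β, ⟪e α, e β⟫_ℂ = if α = β then ((rhoR m α)⁻¹ : ℂ) else 0)
    (hdense : Dense ((span ℂ (Set.range e) : Submodule ℂ H) : Set H))
    (hMz : ∀ i α, Mz i (e α) = e (α + Pi.single i 1)) (hMrow : ∀ f, Mrow f = ∑ i, Mz i (f i))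
    (α : Fin n → ℕ) :
    (Mrow ∘L Mrow†) (e α) = (((∑ j, α j : ℕ) / (m + (∑ j, α j : ℕ) - 1) : ℝ) : ℂ) • e α := by
  rw [comp_apply, adjoint_apply_of_apply_eq_sum Mz hMrow, hMrow, Finset.sum_congr rfl fun i _ ↦ apply_adjoint_apply_of_apply_eq_add_single hm horth hdense
    (hMz i) α, ← Finset.sum_smul, Nat.cast_sum, Finset.sum_div, Complex.ofReal_sum]

theorem inv_mul_norm_sq_le_norm_adjoint_rowOp_sq (hm : 1 ≤ m)
    (horth : ∀ α β, ⟪e α, e β⟫_ℂ = if α = β then ((rhoR m α)⁻¹ : ℂ) else 0)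
    (hdense : Dense ((span ℂ (Set.range e) : Submodule ℂ H) : Set H))
    (hMz : ∀ i α, Mz i (e α) = e (α + Pi.single i 1)) (hMrow : ∀ f, Mrow f = ∑ i, Mz i (f i))
    {g : H} (hg : ⟪e 0, g⟫_ℂ = 0) : (m : ℝ)⁻¹ * ‖g‖ ^ 2 ≤ ‖(Mrow†) g‖ ^ 2 := by
  -- adding the projection onto `e 0` lifts the eigenvalue `0` of `Mrow Mrow†` at `e 0` to `1`
  set Q : H →L[ℂ] H := (innerSL ℂ (e 0)).smulRight (e 0)
  have hQ : ∀ α, Q (e α) = ((if α = 0 then 1 else 0 : ℝ) : ℂ) • e α := fun α ↦ by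
    obtain rfl | hα := eq_or_ne α 0
    · rw [smulRight_apply, innerSL_apply_apply, horth, if_pos rfl, rhoR_zero]
      simp
    · simp [Q, horth, hα, Ne.symm hα]
  have key := mul_norm_sq_le_re_inner_of_apply_eq_smul
    (pairwise_inner_eq_zero_of_inner_eq_ite horth) hdense (T := Mrow ∘L Mrow† + Q)
    (fun α ↦ by rw [add_apply, hQ, rowOp_comp_adjoint_apply hm horth hdense hMz hMrow, ← add_smul,
      ← Complex.ofReal_add, add_comm]; rfl) (inv_le_ite_add_sum_div hm) g
  rw [add_apply, inner_add_left, map_add, smulRight_apply, innerSL_apply_apply, hg, zero_smul,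
    inner_zero_left, map_zero, add_zero] at key
  rw [apply_norm_sq_eq_inner_adjoint_left (Mrow†) g, adjoint_adjoint]
  exact key

end RowOperator

/-- `H_m(𝔹)` is modelled by its monomials `e α`, with `‖e α‖² = 1/ρ_m(α)`; `f(0) = ⟪e 0, f⟫`
since `e 0 = 1` is the reproducing kernel at the origin. -/
theorem row_op_closed_range (n m : ℕ) (hm : 1 ≤ m)
    {H : Type*} [NormedAddCommGroup H] [InnerProductSpace ℂ H] [CompleteSpace H]
    (e : (Fin n → ℕ) → H)
    (horth : ∀ α β, ⟪e α, e β⟫_ℂ = if α = β then ((rhoR m α)⁻¹ : ℂ) else 0)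
    (hdense : Dense ((Submodule.span ℂ (Set.range e) : Submodule ℂ H) : Set H))
    (Mz : Fin n → H →L[ℂ] H)
    (hMz : ∀ i α, Mz i (e α) = e (α + Pi.single i 1))
    (Mrow : PiLp 2 (fun _ : Fin n => H) →L[ℂ] H)
    (hMrow : ∀ f, Mrow f = ∑ i, Mz i (f i)) :
    IsClosed (Set.range Mrow) ∧
      Set.range Mrow = {f : H | ⟪e (0 : Fin n → ℕ), f⟫_ℂ = 0} := by
  have hrange : Set.range Mrow = (innerSL ℂ (e 0)).ker :=
    range_eq_of_mul_norm_sq_le_norm_adjoint_sq Mrow (innerSL ℂ (e 0)).isClosed_ker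
      (inner_rowOp_eq_zero horth hdense hMz hMrow) (by positivity)
      fun _ ↦ inv_mul_norm_sq_le_norm_adjoint_rowOp_sq hm horth hdense hMz hMrow
  exact ⟨hrange ▸ (innerSL ℂ (e 0)).isClosed_ker, hrange⟩
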